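/- arXiv:1801.08181 — 2 statements merged into one kernel-verified Lean document; each statement's English description precedes it below -/
import Mathlib

section
/- Let U ≥ 1, K ≥ 1, M ≥ 1 and 1 ≤ n ≤ M be natural numbers, and let R > 0, η > 0, α > 0, ε_n > 0, a_n > 0 be real. For 1 ≤ u ≤ U set θ_u = cos((2u−1)π/(2U)), b_u = (π/(2U))·√(1−θ_u²)·(θ_u+1), c_u = 1 + ((R/2)·(θ_u+1))^α. For ρ > 0 define β(ρ) = ε_n/(ρ·a_n) and P(ρ) = (M!/((M−n)!·n!)) · ( Σ_{u=1}^U (b_u/K!) · (β(ρ)·c_u/η)^K )^n. Then P(ρ) > 0 for all ρ > 0, and lim_{ρ→∞} ( − log P(ρ) / log ρ ) = n·K. -/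
open Real Filter Finset Topology

/-! If `P ρ = A ρ^(-d)` with `A > 0` for large `ρ`, then `-log P(ρ) / log ρ = d - log A / log ρ`,
which tends to `d`. For the outage probability, `β(ρ)` is `ρ⁻¹` times a constant, so
`P(ρ) = A ρ^(-nK)`, where `A > 0` because the Gauss–Chebyshev nodes lie strictly inside `(-1, 1)`
and hence the weights `b_u` are positive. -/

theorem tendsto_neg_log_div_log_of_eventuallyEq_mul_rpow_neg {f : ℝ → ℝ} {A d : ℝ} (hA : 0 < A)
    (hf : ∀ᶠ ρ in atTop, f ρ = A * ρ ^ (-d)) :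
    Tendsto (fun ρ => -log (f ρ) / log ρ) atTop (𝓝 d) := by
  have hlim : Tendsto (fun ρ => d - log A / log ρ) atTop (𝓝 d) := by
    simpa using tendsto_const_nhds.sub (tendsto_const_nhds.div_atTop tendsto_log_atTop)
  refine hlim.congr' ?_
  filter_upwards [hf, eventually_gt_atTop 1] with ρ hfρ hρ
  have hρ0 : 0 < ρ := by linarith
  have hlog : 0 < log ρ := log_pos hρ
  rw [hfρ, log_mul hA.ne' (rpow_pos_of_pos hρ0 _).ne', log_rpow hρ0]
  field_simp
  ring

theorem chebyshev_angle_mem_Ioo {U u : ℕ} (hu : 1 ≤ u) (huU : u ≤ U) :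
    (2 * (u : ℝ) - 1) * π / (2 * (U : ℝ)) ∈ Set.Ioo 0 π := by
  have hu' : (1 : ℝ) ≤ u := by exact_mod_cast hu
  have huU' : (u : ℝ) ≤ U := by exact_mod_cast huU
  have hU : (0 : ℝ) < 2 * U := by linarith
  constructor
  · exact div_pos (mul_pos (by linarith) pi_pos) hU
  · rw [div_lt_iff₀ hU]
    nlinarith [pi_pos]

theorem sqrt_one_sub_cos_sq_mul_cos_add_one_pos {x : ℝ} (hx : x ∈ Set.Ioo 0 π) :
    0 < √(1 - cos x ^ 2) * (cos x + 1) := by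
  have hsin : 0 < sin x := sin_pos_of_pos_of_lt_pi hx.1 hx.2
  have hcos : -1 < cos x := by nlinarith [sin_sq_add_cos_sq x]
  rw [← sin_eq_sqrt_one_sub_cos_sq hx.1.le hx.2.le]
  exact mul_pos hsin (by linarith)

theorem diversity_order_n_user_pSIC_general
    (U K M n : ℕ) (hU : 1 ≤ U)
    (R η α εn an : ℝ) (hR : 0 < R) (hη : 0 < η) (hεn : 0 < εn) (han : 0 < an)
    (θ b c : ℕ → ℝ)
    (hθ : ∀ u, θ u = Real.cos ((2 * (u : ℝ) - 1) * Real.pi / (2 * (U : ℝ))))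
    (hb : ∀ u, b u = Real.pi / (2 * (U : ℝ)) * Real.sqrt (1 - θ u ^ 2) * (θ u + 1))
    (hc : ∀ u, c u = 1 + (R / 2 * (θ u + 1)) ^ α)
    (β P : ℝ → ℝ)
    (hβ : ∀ ρ, β ρ = εn / (ρ * an))
    (hP : ∀ ρ, P ρ
      = ((Nat.factorial M : ℝ) / ((Nat.factorial (M - n) : ℝ) * (Nat.factorial n : ℝ))) *
        (∑ u ∈ Finset.Icc 1 U, b u / (Nat.factorial K : ℝ) * (β ρ * c u / η) ^ K) ^ n) :
    (∀ ρ > 0, 0 < P ρ) ∧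
    Filter.Tendsto (fun ρ => - Real.log (P ρ) / Real.log ρ) Filter.atTop
      (nhds ((n : ℝ) * (K : ℝ))) := by
  set C := (Nat.factorial M : ℝ) / ((Nat.factorial (M - n) : ℝ) * (Nat.factorial n : ℝ))
  set T := ∑ u ∈ Icc 1 U, b u / (Nat.factorial K : ℝ) * (εn * c u / (an * η)) ^ K
  have hb_pos : ∀ u ∈ Icc 1 U, 0 < b u := fun u hu => by
    obtain ⟨hu, huU⟩ := mem_Icc.mp hu
    rw [hb, hθ, mul_assoc]
    exact mul_pos (by positivity)
      (sqrt_one_sub_cos_sq_mul_cos_add_one_pos (chebyshev_angle_mem_Ioo hu huU))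
  have hc_pos : ∀ u, 0 < c u := fun u => by
    have hθ1 : 0 ≤ θ u + 1 := by linarith [hθ u ▸ neg_one_le_cos _]
    rw [hc]
    linarith [rpow_nonneg (mul_nonneg (half_pos hR).le hθ1) α]
  have hT : 0 < T := sum_pos (fun u hu => by have := hb_pos u hu; have := hc_pos u; positivity)
    ⟨1, mem_Icc.mpr ⟨le_rfl, hU⟩⟩
  have hP_eq : ∀ ρ > 0, P ρ = C * T ^ n * ρ ^ (-((n : ℝ) * K)) := by
    intro ρ hρ
    have hsum : ∑ u ∈ Icc 1 U, b u / (Nat.factorial K : ℝ) * (β ρ * c u / η) ^ K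
        = (ρ ^ K)⁻¹ * T := by
      rw [mul_sum]
      refine sum_congr rfl fun u _ => ?_
      rw [hβ, ← inv_pow, mul_left_comm (ρ⁻¹ ^ K), ← mul_pow]
      congr 2
      field_simp
    rw [hP, hsum, rpow_neg hρ.le, ← Nat.cast_mul, rpow_natCast, mul_comm n, pow_mul]
    ring
  refine ⟨fun ρ hρ => hP_eq ρ hρ ▸ by positivity,
    tendsto_neg_log_div_log_of_eventuallyEq_mul_rpow_neg (A := C * T ^ n) (by positivity) ?_⟩
  filter_upwards [eventually_gt_atTop 0] with ρ hρ using hP_eq ρ hρ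

/-- Perfect-SIC part of Remark 2 of the paper: the asymptotic high-SNR outage probability of
the `n`-th user with perfect SIC for CD-NOMA,
`P(ρ) = (M!/((M-n)! n!)) (∑_{u=1}^U (b_u/K!) (β(ρ) c_u/η)^K)^n`, is positive for all
`ρ > 0` and satisfies `-log P(ρ)/log ρ → n K`, i.e. the diversity order is `n K`. -/
theorem diversity_order_n_user_pSIC
    (U K M n : ℕ) (hU : 1 ≤ U) (hK : 1 ≤ K) (hM : 1 ≤ M) (hn1 : 1 ≤ n) (hnM : n ≤ M)
    (R η α εn an : ℝ) (hR : 0 < R) (hη : 0 < η) (hα : 0 < α) (hεn : 0 < εn) (han : 0 < an)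
    (θ b c : ℕ → ℝ)
    (hθ : ∀ u, θ u = Real.cos ((2 * (u : ℝ) - 1) * Real.pi / (2 * (U : ℝ))))
    (hb : ∀ u, b u = Real.pi / (2 * (U : ℝ)) * Real.sqrt (1 - θ u ^ 2) * (θ u + 1))
    (hc : ∀ u, c u = 1 + (R / 2 * (θ u + 1)) ^ α)
    (β P : ℝ → ℝ)
    (hβ : ∀ ρ, β ρ = εn / (ρ * an))
    (hP : ∀ ρ, P ρ
      = ((Nat.factorial M : ℝ) / ((Nat.factorial (M - n) : ℝ) * (Nat.factorial n : ℝ))) *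
        (∑ u ∈ Finset.Icc 1 U, b u / (Nat.factorial K : ℝ) * (β ρ * c u / η) ^ K) ^ n) :
    (∀ ρ > 0, 0 < P ρ) ∧
    Filter.Tendsto (fun ρ => - Real.log (P ρ) / Real.log ρ) Filter.atTop
      (nhds ((n : ℝ) * (K : ℝ))) :=
  diversity_order_n_user_pSIC_general U K M n hU R η α εn an hR hη hεn han θ b c hθ hb hc β P hβ hP
end

section
/- Adopt the setup: R > 0, η > 0, α > 0, ε_m > 0, a_m > 0, a_n > 0 real with a_m > ε_m·a_n, and K ≥ 1, M ≥ 1, 1 ≤ m ≤ M natural numbers. For each ρ > 0, let (r_1, Y_1), …, (r_M, Y_M) be i.i.d. pairs with r_j of density 2s/R² on [0,R] and Y_j Erlang(K) independent of r_j; set Z_j = η·Y_j/(1 + r_j^α), let Z_(m) be the m-th smallest among Z_1,…,Z_M, and let P(ρ) = P( ρ·Z_(m)·a_m/(ρ·Z_(m)·a_n + 1) ≤ ε_m ). Then lim_{ρ→∞} ρ^{mK} · P(ρ) = (M!/((M−m)!·m!)) · ( (2/R²) · ∫_0^R ( ((1+s^α)·ε_m / (η·(a_m − ε_m·a_n)))^K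 / K! ) · s ds )^m. -/
/-!
An Erlang(K) gain satisfies `e^{-y} y^K/K! ≤ P(Y ≤ y) ≤ y^K/K!` for `y ≥ 0` (induction on `K`,
convolving with the exponential density). Conditioning on the distance `r`, whose density is
`2s/R²` on `[0, R]`, gives `e^{-Ct} c t^K ≤ P(Z ≤ t) ≤ c t^K` for the effective gain
`Z = ηY/(1 + r^α)`, with `C = (1 + R^α)/η` and `c = ∫₀ᴿ (2s/R²) ((1 + s^α)/η)^K / K! ds`.
For `ρ > 0` the outage event is `Z_(m) ≤ t` with `t = ε_m/((a_m - ε_m a_n) ρ)`, i.e. at least `m`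
of the `M` independent gains are `≤ t`; its probability lies between
`C(M,m) p_lo^m (1 - p_hi)^{M-m}` and `C(M,m) p_hi^m`, where `p_lo ≤ P(Z_j ≤ t) ≤ p_hi` are the
bounds above. After multiplication by `ρ^{mK}` both tend to `C(M,m) (c (ε_m/(a_m - ε_m a_n))^K)^m`.
-/

open MeasureTheory ProbabilityTheory
open Finset Filter Topology Real
open scoped ENNReal Nat

/-- The `m`-th smallest value (1-indexed) among `v 0, …, v (M-1)`. -/
noncomputable def orderStat {M : ℕ} (v : Fin M → ℝ) (m : ℕ) : ℝ :=
  ((List.ofFn v).mergeSort (fun a b => a ≤ b)).getD (m - 1) 0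

lemma List.countP_ofFn {α : Type*} {n : ℕ} (v : Fin n → α) (p : α → Prop) [DecidablePred p] :
    (List.ofFn v).countP (fun a => decide (p a)) = #{j | p (v j)} := by
  rw [← Multiset.coe_countP, ← Fin.univ_val_map, Multiset.countP_map, card_def, filter_val]

lemma Monotone.le_iff_lt_card_filter_le {α : Type*} [LinearOrder α] {n : ℕ} {g : Fin n → α}
    (hg : Monotone g) (k : Fin n) (t : α) : g k ≤ t ↔ (k : ℕ) < #{i | g i ≤ t} := by
  constructor
  · intro hk
    calc (k : ℕ) < #(Iic k) := by rw [Fin.card_Iic]; omega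
      _ ≤ #{i | g i ≤ t} :=
        card_le_card fun i hi => mem_filter.2 ⟨mem_univ i, (hg (mem_Iic.1 hi)).trans hk⟩
  · intro hlt
    by_contra hk
    have hsub : #{i | g i ≤ t} ≤ #(Iio k) := card_le_card fun i hi =>
      mem_Iio.2 (lt_of_not_ge fun hki => hk ((hg hki).trans (mem_filter.1 hi).2))
    rw [Fin.card_Iio] at hsub
    omega

lemma orderStat_eq_getElem {M : ℕ} (v : Fin M → ℝ) {m : ℕ} (hm1 : 1 ≤ m) (hmM : m ≤ M) :
    ∃ h, orderStat v m = ((List.ofFn v).mergeSort (fun a b => a ≤ b))[m - 1]'h :=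
  have h : m - 1 < ((List.ofFn v).mergeSort (fun a b => a ≤ b)).length := by
    rw [List.length_mergeSort, List.length_ofFn]; omega
  ⟨h, List.getD_eq_getElem _ _ h⟩

lemma orderStat_mem_range {M : ℕ} (v : Fin M → ℝ) {m : ℕ} (hm1 : 1 ≤ m) (hmM : m ≤ M) :
    orderStat v m ∈ Set.range v := by
  obtain ⟨h, hv⟩ := orderStat_eq_getElem v hm1 hmM
  rw [hv, ← List.mem_ofFn']
  exact (List.mergeSort_perm _ _).mem_iff.1 (List.getElem_mem h)

lemma orderStat_le_iff {M : ℕ} (v : Fin M → ℝ) {m : ℕ} (hm1 : 1 ≤ m) (hmM : m ≤ M) (t : ℝ) :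
    orderStat v m ≤ t ↔ m ≤ #{j | v j ≤ t} := by
  obtain ⟨h, hv⟩ := orderStat_eq_getElem v hm1 hmM
  rw [hv, ← List.get_eq_getElem (i := ⟨m - 1, h⟩),
    List.sortedLE_mergeSort.monotone_get.le_iff_lt_card_filter_le, ← List.countP_ofFn _ (· ≤ t),
    List.ofFn_get, (List.mergeSort_perm _ _).countP_eq, List.countP_ofFn]
  simp only
  omega

lemma setOf_filter_le_eq {Ω ι : Type*} [Fintype ι] [DecidableEq ι] (Z : ι → Ω → ℝ) (t : ℝ)
    (S : Finset ι) :
    {ω | ({i | Z i ω ≤ t} : Finset ι) = S}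
      = ⋂ i ∈ univ, Z i ⁻¹' (if i ∈ S then Set.Iic t else (Set.Iic t)ᶜ) := by
  ext ω
  simp only [Set.mem_ofPred_eq, Finset.ext_iff, mem_filter, mem_univ, true_and, Set.mem_iInter,
    Set.mem_preimage]
  refine forall_congr' fun i => ?_
  by_cases hi : i ∈ S <;> simp [hi]

section Counting

variable {Ω ι : Type*} [MeasurableSpace Ω] {μ : Measure Ω}

lemma ProbabilityTheory.iIndepFun.measureReal_biInter_preimage {β : Type*} [MeasurableSpace β]
    {Z : ι → Ω → β} (hind : iIndepFun Z μ) {B : ι → Set β}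
    (hB : ∀ i, MeasurableSet (B i)) (S : Finset ι) :
    μ.real (⋂ i ∈ S, Z i ⁻¹' B i) = ∏ i ∈ S, μ.real (Z i ⁻¹' B i) := by
  simp only [measureReal_def, hind.measure_inter_preimage_eq_mul S fun i _ => hB i,
    ENNReal.toReal_prod]

variable [Fintype ι] {Z : ι → Ω → ℝ}

lemma measureReal_card_le_le_choose_mul_pow [IsFiniteMeasure μ] (hind : iIndepFun Z μ) (t : ℝ)
    {h : ℝ} (hh : ∀ i, μ.real (Z i ⁻¹' Set.Iic t) ≤ h) (m : ℕ) :
    μ.real {ω | m ≤ #{i | Z i ω ≤ t}} ≤ (Fintype.card ι).choose m * h ^ m := by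
  classical
  have hsub : {ω | m ≤ #{i | Z i ω ≤ t}}
      ⊆ ⋃ S ∈ powersetCard m univ, ⋂ i ∈ S, Z i ⁻¹' Set.Iic t := by
    intro ω hω
    obtain ⟨S, hS, hcard⟩ := exists_subset_card_eq hω
    simp only [Set.mem_iUnion, Set.mem_iInter, mem_powersetCard]
    exact ⟨S, ⟨subset_univ S, hcard⟩, fun i hi => (mem_filter.1 (hS hi)).2⟩
  have hS : ∀ S ∈ powersetCard m univ, μ.real (⋂ i ∈ S, Z i ⁻¹' Set.Iic t) ≤ h ^ m := by
    intro S hS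
    rw [hind.measureReal_biInter_preimage (fun _ => measurableSet_Iic),
      ← (mem_powersetCard.1 hS).2, ← prod_const]
    exact prod_le_prod (fun _ _ => measureReal_nonneg) fun i _ => hh i
  calc μ.real {ω | m ≤ #{i | Z i ω ≤ t}}
      ≤ ∑ S ∈ powersetCard m univ, μ.real (⋂ i ∈ S, Z i ⁻¹' Set.Iic t) :=
        (measureReal_mono hsub (measure_ne_top μ _)).trans (measureReal_biUnion_finset_le _ _)
    _ ≤ ∑ S ∈ powersetCard m univ, h ^ m := sum_le_sum hS
    _ = (Fintype.card ι).choose m * h ^ m := by simp [card_powersetCard]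

lemma pow_mul_pow_le_measureReal_filter_le_eq [IsProbabilityMeasure μ] (hZ : ∀ i, Measurable (Z i))
    (hind : iIndepFun Z μ) (t : ℝ) {l h : ℝ} (hl : 0 ≤ l) (hh : h ≤ 1)
    (hlo : ∀ i, l ≤ μ.real (Z i ⁻¹' Set.Iic t)) (hhi : ∀ i, μ.real (Z i ⁻¹' Set.Iic t) ≤ h)
    (S : Finset ι) :
    l ^ #S * (1 - h) ^ (Fintype.card ι - #S) ≤ μ.real {ω | ({i | Z i ω ≤ t} : Finset ι) = S} := by
  classical
  rw [setOf_filter_le_eq, hind.measureReal_biInter_preimage fun i => by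
    split_ifs
    exacts [measurableSet_Iic, measurableSet_Iic.compl]]
  calc l ^ #S * (1 - h) ^ (Fintype.card ι - #S) = ∏ i, if i ∈ S then l else 1 - h := by
        rw [prod_ite, prod_const, prod_const, filter_not, filter_univ_mem,
          ← compl_eq_univ_sdiff, card_compl]
    _ ≤ _ := by
        refine prod_le_prod (fun i _ => ?_) fun i _ => ?_
        · split_ifs <;> linarith
        · split_ifs
          · exact hlo i
          · rw [Set.preimage_compl, probReal_compl_eq_one_sub (hZ i measurableSet_Iic)]
            linarith [hhi i]

lemma choose_mul_pow_le_measureReal_card_le [IsProbabilityMeasure μ] (hZ : ∀ i, Measurable (Z i))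
    (hind : iIndepFun Z μ) (t : ℝ) {l h : ℝ} (hl : 0 ≤ l) (hh : h ≤ 1)
    (hlo : ∀ i, l ≤ μ.real (Z i ⁻¹' Set.Iic t)) (hhi : ∀ i, μ.real (Z i ⁻¹' Set.Iic t) ≤ h)
    (m : ℕ) :
    (Fintype.card ι).choose m * (l ^ m * (1 - h) ^ (Fintype.card ι - m))
      ≤ μ.real {ω | m ≤ #{i | Z i ω ≤ t}} := by
  classical
  have hmeas (S : Finset ι) : MeasurableSet {ω | ({i | Z i ω ≤ t} : Finset ι) = S} := by
    rw [setOf_filter_le_eq]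
    exact .biInter (Set.to_countable _) fun i _ => hZ i (by
      split_ifs
      exacts [measurableSet_Iic, measurableSet_Iic.compl])
  calc (Fintype.card ι).choose m * (l ^ m * (1 - h) ^ (Fintype.card ι - m))
      = ∑ S ∈ powersetCard m univ, l ^ m * (1 - h) ^ (Fintype.card ι - m) := by
        simp [card_powersetCard]
    _ ≤ ∑ S ∈ powersetCard m univ, μ.real {ω | ({i | Z i ω ≤ t} : Finset ι) = S} :=
        sum_le_sum fun S hS => (mem_powersetCard.1 hS).2 ▸
          pow_mul_pow_le_measureReal_filter_le_eq hZ hind t hl hh hlo hhi S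
    _ = μ.real (⋃ S ∈ powersetCard m univ, {ω | ({i | Z i ω ≤ t} : Finset ι) = S}) :=
        (measureReal_biUnion_finset (fun S _ T _ hST => Set.disjoint_left.2 fun ω hS hT =>
          hST (hS.symm.trans hT)) fun S _ => hmeas S).symm
    _ ≤ μ.real {ω | m ≤ #{i | Z i ω ≤ t}} :=
        measureReal_mono <| Set.iUnion₂_subset fun S hS ω hω => by
          rw [Set.mem_ofPred_eq, show ({i | Z i ω ≤ t} : Finset ι) = S from hω,
            (mem_powersetCard.1 hS).2]

end Counting

section Laws

variable {Ω : Type*} [MeasurableSpace Ω] {μ : Measure Ω}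

lemma ProbabilityTheory.IndepFun.measure_preimage_eq_lintegral [IsFiniteMeasure μ]
    {α β : Type*} [MeasurableSpace α] [MeasurableSpace β] {X : Ω → α} {Y : Ω → β}
    (hXY : IndepFun X Y μ) (hX : Measurable X) (hY : Measurable Y) {A : Set (α × β)}
    (hA : MeasurableSet A) :
    μ ((fun ω => (X ω, Y ω)) ⁻¹' A) = ∫⁻ x, μ.map Y (Prod.mk x ⁻¹' A) ∂μ.map X := by
  rw [← Measure.map_apply (hX.prodMk hY) hA,
    (indepFun_iff_map_prod_eq_prod_map_map hX.aemeasurable hY.aemeasurable).1 hXY,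
    Measure.prod_apply hA]

lemma ae_mem_of_map_eq_withDensity {α : Type*} [MeasurableSpace α] {X : Ω → α}
    (hX : Measurable X) {ν : Measure α} {f : α → ℝ≥0∞} (hf : Measurable f) {S : Set α}
    (hS : MeasurableSet S) (hlaw : μ.map X = ν.withDensity f) (hfS : ∀ x ∉ S, f x = 0) :
    ∀ᵐ ω ∂μ, X ω ∈ S := by
  rw [← ae_map_iff (p := (· ∈ S)) hX.aemeasurable hS, hlaw, ae_withDensity_iff hf]
  exact ae_of_all _ fun x hx => by_contra fun hxS => hx (hfS x hxS)

lemma ae_nonneg_of_map_eq_expMeasure {X : Ω → ℝ} (hX : Measurable X)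
    (hlaw : μ.map X = expMeasure 1) : ∀ᵐ ω ∂μ, 0 ≤ X ω :=
  ae_mem_of_map_eq_withDensity (ν := volume) (f := exponentialPDF 1) hX
    (measurable_exponentialPDFReal 1).ennreal_ofReal measurableSet_Ici hlaw
    fun _ hx => exponentialPDF_of_neg (not_le.1 hx)

lemma setLIntegral_Icc_ofReal_eq_intervalIntegral {f : ℝ → ℝ} {a b : ℝ} (hab : a ≤ b)
    (hf : ContinuousOn f (Set.Icc a b)) (hf0 : ∀ x ∈ Set.Icc a b, 0 ≤ f x) :
    ∫⁻ x in Set.Icc a b, ENNReal.ofReal (f x) = ENNReal.ofReal (∫ x in a..b, f x) := by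
  rw [intervalIntegral.integral_of_le hab, ← integral_Icc_eq_integral_Ioc,
    ofReal_integral_eq_lintegral_ofReal hf.integrableOn_Icc
      ((ae_restrict_iff' measurableSet_Icc).2 (ae_of_all _ hf0))]

lemma integral_sub_pow_div_factorial (y : ℝ) (n : ℕ) :
    ∫ b in (0 : ℝ)..y, (y - b) ^ n / n ! = y ^ (n + 1) / (n + 1)! := by
  rw [intervalIntegral.integral_div, intervalIntegral.integral_comp_sub_left (· ^ n), sub_self,
    sub_zero, integral_pow, Nat.factorial_succ]
  push_cast
  rw [zero_pow n.succ_ne_zero, sub_zero]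
  field_simp

lemma setLIntegral_Icc_ofReal_mul_sub_pow_div_factorial {y : ℝ} (hy : 0 ≤ y) (n : ℕ) {c : ℝ}
    (hc : 0 ≤ c) :
    ∫⁻ b in Set.Icc 0 y, ENNReal.ofReal (c * ((y - b) ^ n / n !))
      = ENNReal.ofReal (c * (y ^ (n + 1) / (n + 1)!)) := by
  rw [setLIntegral_Icc_ofReal_eq_intervalIntegral hy (by fun_prop) fun b hb => ?_,
    intervalIntegral.integral_const_mul, integral_sub_pow_div_factorial]
  have : 0 ≤ y - b := sub_nonneg.2 hb.2
  positivity

lemma measure_add_le_eq_setLIntegral_exp [IsFiniteMeasure μ] {W X : Ω → ℝ}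
    (hW : Measurable W) (hX : Measurable X) (hWX : IndepFun W X μ)
    (hlaw : μ.map W = expMeasure 1) (hX0 : ∀ᵐ ω ∂μ, 0 ≤ X ω) (y : ℝ) :
    μ {ω | W ω + X ω ≤ y}
      = ∫⁻ b in Set.Icc 0 y, ENNReal.ofReal (exp (-b)) * μ {ω | X ω ≤ y - b} := by
  have hA : MeasurableSet {p : ℝ × ℝ | p.1 + p.2 ≤ y} :=
    measurableSet_le (by fun_prop) measurable_const
  have hsec (b : ℝ) : Prod.mk b ⁻¹' {p : ℝ × ℝ | p.1 + p.2 ≤ y} = Set.Iic (y - b) := by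
    ext x
    simp only [Set.mem_preimage, Set.mem_ofPred_eq, Set.mem_Iic]
    constructor <;> intro h <;> linarith
  have hF : Measurable fun b => μ.map X (Set.Iic (y - b)) :=
    Antitone.measurable fun a b hab => measure_mono (Set.Iic_subset_Iic.2 (by linarith))
  rw [← lintegral_indicator measurableSet_Icc]
  change μ ((fun ω => (W ω, X ω)) ⁻¹' {p : ℝ × ℝ | p.1 + p.2 ≤ y}) = _
  rw [hWX.measure_preimage_eq_lintegral hW hX hA, hlaw]
  simp_rw [hsec]
  rw [show expMeasure 1 = volume.withDensity (exponentialPDF 1) from rfl,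
    lintegral_withDensity_eq_lintegral_mul _ (f := exponentialPDF 1)
      (measurable_exponentialPDFReal 1).ennreal_ofReal hF]
  refine lintegral_congr fun b => ?_
  rw [Pi.mul_apply, Measure.map_apply hX measurableSet_Iic]
  by_cases hb : b ∈ Set.Icc 0 y
  · rw [Set.indicator_of_mem hb, exponentialPDF_of_nonneg hb.1, one_mul, one_mul]
    rfl
  · rw [Set.indicator_of_notMem hb]
    rcases not_and_or.1 hb with hb | hb
    · rw [exponentialPDF_of_neg (not_le.1 hb), zero_mul]
    · refine mul_eq_zero_of_right _ (measure_mono_null (fun ω hω => ?_) (ae_iff.1 hX0))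
      simp only [Set.mem_preimage, Set.mem_Iic] at hω
      simp only [Set.mem_ofPred_eq]
      linarith

lemma ae_nonneg_sum_of_map_eq_expMeasure {ι : Type*} {E : ι → Ω → ℝ} (hE : ∀ i, Measurable (E i))
    (hlaw : ∀ i, μ.map (E i) = expMeasure 1) (s : Finset ι) : ∀ᵐ ω ∂μ, 0 ≤ ∑ i ∈ s, E i ω := by
  filter_upwards [(eventually_all_finset s).2 fun i _ =>
    ae_nonneg_of_map_eq_expMeasure (hE i) (hlaw i)] with ω hω using sum_nonneg hω

theorem cdf_sum_exp_bounds [IsProbabilityMeasure μ] {ι : Type*} {E : ι → Ω → ℝ}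
    (hE : ∀ i, Measurable (E i)) (hind : iIndepFun E μ) (hlaw : ∀ i, μ.map (E i) = expMeasure 1)
    (s : Finset ι) {y : ℝ} (hy : 0 ≤ y) :
    ENNReal.ofReal (exp (-y) * (y ^ #s / (#s)!)) ≤ μ {ω | ∑ i ∈ s, E i ω ≤ y} ∧
      μ {ω | ∑ i ∈ s, E i ω ≤ y} ≤ ENNReal.ofReal (y ^ #s / (#s)!) := by
  classical
  induction s using Finset.induction_on generalizing y with
  | empty =>
    simp only [sum_empty, hy, Set.ofPred_true, measure_univ, card_empty, pow_zero,
      Nat.factorial_zero, Nat.cast_one, div_one, mul_one, ENNReal.ofReal_one, le_refl, and_true]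
    exact ENNReal.ofReal_le_one.2 (exp_le_one_iff.2 (neg_nonpos.2 hy))
  | insert j s hj ih =>
    have hX : Measurable fun ω => ∑ i ∈ s, E i ω := Finset.measurable_fun_sum s fun i _ => hE i
    have hjX : IndepFun (E j) (fun ω => ∑ i ∈ s, E i ω) μ := by
      simpa only [Finset.sum_fn] using (hind.indepFun_finsetSum_of_notMem hE hj).symm
    simp only [sum_insert hj, card_insert_of_notMem hj]
    rw [measure_add_le_eq_setLIntegral_exp (hE j) hX hjX (hlaw j)
      (ae_nonneg_sum_of_map_eq_expMeasure hE hlaw s) y]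
    constructor
    · rw [← setLIntegral_Icc_ofReal_mul_sub_pow_div_factorial hy _ (exp_nonneg _)]
      refine setLIntegral_mono' measurableSet_Icc fun b hb => ?_
      calc ENNReal.ofReal (exp (-y) * ((y - b) ^ #s / (#s)!))
          = ENNReal.ofReal (exp (-b))
              * ENNReal.ofReal (exp (-(y - b)) * ((y - b) ^ #s / (#s)!)) := by
            rw [← ENNReal.ofReal_mul (exp_nonneg _), ← mul_assoc, ← exp_add]
            ring_nf
        _ ≤ _ := mul_le_mul_right (ih (sub_nonneg.2 hb.2)).1 _
    · calc ∫⁻ b in Set.Icc 0 y, ENNReal.ofReal (exp (-b)) * μ {ω | ∑ i ∈ s, E i ω ≤ y - b}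
          ≤ ∫⁻ b in Set.Icc 0 y, ENNReal.ofReal (1 * ((y - b) ^ #s / (#s)!)) := by
            refine setLIntegral_mono' measurableSet_Icc fun b hb => ?_
            rw [one_mul, ← one_mul (ENNReal.ofReal ((y - b) ^ #s / (#s)!))]
            exact mul_le_mul' (ENNReal.ofReal_le_one.2 (exp_le_one_iff.2 (neg_nonpos.2 hb.1)))
              (ih (sub_nonneg.2 hb.2)).2
        _ = _ := by rw [setLIntegral_Icc_ofReal_mul_sub_pow_div_factorial hy _ zero_le_one, one_mul]

def IsErlang (μ : Measure Ω) (K : ℕ) (Y : Ω → ℝ) : Prop :=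
  ∃ E : Fin K → Ω → ℝ, (∀ i, Measurable (E i)) ∧ iIndepFun E μ ∧
    (∀ i, μ.map (E i) = expMeasure 1) ∧ Y = fun ω => ∑ i, E i ω

lemma IsErlang.ae_nonneg {K : ℕ} {Y : Ω → ℝ} (hY : IsErlang μ K Y) : ∀ᵐ ω ∂μ, 0 ≤ Y ω := by
  obtain ⟨E, hE, -, hlaw, rfl⟩ := hY
  exact ae_nonneg_sum_of_map_eq_expMeasure hE hlaw univ

lemma IsErlang.cdf_bounds [IsProbabilityMeasure μ] {K : ℕ} {Y : Ω → ℝ} (hY : IsErlang μ K Y)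
    {y : ℝ} (hy : 0 ≤ y) :
    ENNReal.ofReal (exp (-y) * (y ^ K / K !)) ≤ μ {ω | Y ω ≤ y} ∧
      μ {ω | Y ω ≤ y} ≤ ENNReal.ofReal (y ^ K / K !) := by
  obtain ⟨E, hE, hind, hlaw, rfl⟩ := hY
  simpa using cdf_sum_exp_bounds hE hind hlaw univ hy

lemma measurable_ofReal_radialDensity (R : ℝ) : Measurable fun s : ℝ =>
    ENNReal.ofReal (if s ∈ Set.Icc (0 : ℝ) R then 2 * s / R ^ 2 else 0) :=
  (Measurable.ite measurableSet_Icc (by fun_prop) measurable_const).ennreal_ofReal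

noncomputable def fadingConst (R η α : ℝ) (K : ℕ) : ℝ :=
  ∫ s in (0 : ℝ)..R, 2 * s / R ^ 2 * (((1 + s ^ α) / η) ^ K / K !)

lemma fadingConst_nonneg {R η : ℝ} (hR : 0 ≤ R) (hη : 0 ≤ η) (α : ℝ) (K : ℕ) :
    0 ≤ fadingConst R η α K :=
  intervalIntegral.integral_nonneg hR fun s hs => by
    have := hs.1
    positivity

lemma measure_fadingGain_le_eq [IsFiniteMeasure μ] {R η α : ℝ} (hη : 0 < η) {r Y : Ω → ℝ}
    (hr : Measurable r) (hY : Measurable Y) (hrY : IndepFun r Y μ)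
    (hrlaw : μ.map r = volume.withDensity (fun s =>
      ENNReal.ofReal (if s ∈ Set.Icc (0 : ℝ) R then 2 * s / R ^ 2 else 0))) (t : ℝ) :
    μ {ω | η * Y ω / (1 + r ω ^ α) ≤ t}
      = ∫⁻ s in Set.Icc 0 R,
          ENNReal.ofReal (2 * s / R ^ 2) * μ {ω | Y ω ≤ t * ((1 + s ^ α) / η)} := by
  have hA : MeasurableSet {p : ℝ × ℝ | η * p.2 / (1 + p.1 ^ α) ≤ t} :=
    measurableSet_le (by fun_prop) measurable_const
  have hsec (s : ℝ) (hs : 0 ≤ s) : Prod.mk s ⁻¹' {p : ℝ × ℝ | η * p.2 / (1 + p.1 ^ α) ≤ t}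
      = Set.Iic (t * ((1 + s ^ α) / η)) := by
    ext y
    have : 0 < 1 + s ^ α := by positivity
    simp only [Set.mem_preimage, Set.mem_ofPred_eq, Set.mem_Iic]
    rw [div_le_iff₀ this, ← mul_div_assoc, le_div_iff₀ hη, mul_comm y η]
  change μ ((fun ω => (r ω, Y ω)) ⁻¹' {p : ℝ × ℝ | η * p.2 / (1 + p.1 ^ α) ≤ t}) = _
  rw [hrY.measure_preimage_eq_lintegral hr hY hA, hrlaw,
    lintegral_withDensity_eq_lintegral_mul _ (measurable_ofReal_radialDensity R)
      (measurable_measure_prodMk_left hA), ← lintegral_indicator measurableSet_Icc]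
  refine lintegral_congr fun s => ?_
  by_cases hs : s ∈ Set.Icc 0 R
  · rw [Set.indicator_of_mem hs, Pi.mul_apply, if_pos hs, hsec s hs.1,
      Measure.map_apply hY measurableSet_Iic]
    rfl
  · rw [Set.indicator_of_notMem hs, Pi.mul_apply, if_neg hs, ENNReal.ofReal_zero, zero_mul]

lemma setLIntegral_ofReal_mul_radialDensity {R η α : ℝ} (hR : 0 ≤ R) (hη : 0 ≤ η) (hα : 0 ≤ α)
    (K : ℕ) {k : ℝ} (hk : 0 ≤ k) :
    ∫⁻ s in Set.Icc 0 R, ENNReal.ofReal (k * (2 * s / R ^ 2 * (((1 + s ^ α) / η) ^ K / K !)))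
      = ENNReal.ofReal (k * fadingConst R η α K) := by
  rw [setLIntegral_Icc_ofReal_eq_intervalIntegral hR
    (Continuous.continuousOn (by fun_prop (disch := exact hα))) fun s hs => ?_,
    intervalIntegral.integral_const_mul, fadingConst]
  have := hs.1
  positivity

lemma fadingConst_mul_div_pow (R η α ε δ : ℝ) (K : ℕ) :
    fadingConst R η α K * (ε / δ) ^ K
      = 2 / R ^ 2 * ∫ s in (0 : ℝ)..R, ((1 + s ^ α) * ε / (η * δ)) ^ K / K ! * s := by
  rw [fadingConst, ← intervalIntegral.integral_mul_const, ← intervalIntegral.integral_const_mul]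
  exact intervalIntegral.integral_congr fun s _ => by rw [mul_div_mul_comm, mul_pow]; ring

lemma ae_nonneg_fadingGain {R η α : ℝ} (hη : 0 ≤ η) {K : ℕ} {r Y : Ω → ℝ} (hr : Measurable r)
    (hrlaw : μ.map r = volume.withDensity (fun s =>
      ENNReal.ofReal (if s ∈ Set.Icc (0 : ℝ) R then 2 * s / R ^ 2 else 0)))
    (hY : IsErlang μ K Y) : ∀ᵐ ω ∂μ, 0 ≤ η * Y ω / (1 + r ω ^ α) := by
  filter_upwards [hY.ae_nonneg, ae_mem_of_map_eq_withDensity hr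
    (measurable_ofReal_radialDensity R) measurableSet_Icc hrlaw
    fun s hs => by rw [if_neg hs, ENNReal.ofReal_zero]] with ω hY hr
  have := hr.1
  positivity

theorem fading_cdf_bounds [IsFiniteMeasure μ] {R η α : ℝ} (hR : 0 ≤ R) (hη : 0 < η)
    (hα : 0 ≤ α) {K : ℕ} {r Y : Ω → ℝ} (hr : Measurable r) (hY : Measurable Y)
    (hrY : IndepFun r Y μ)
    (hrlaw : μ.map r = volume.withDensity (fun s =>
      ENNReal.ofReal (if s ∈ Set.Icc (0 : ℝ) R then 2 * s / R ^ 2 else 0)))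
    (hYlo : ∀ y, 0 ≤ y → ENNReal.ofReal (exp (-y) * (y ^ K / K !)) ≤ μ {ω | Y ω ≤ y})
    (hYhi : ∀ y, 0 ≤ y → μ {ω | Y ω ≤ y} ≤ ENNReal.ofReal (y ^ K / K !)) {t : ℝ} (ht : 0 ≤ t) :
    exp (-((1 + R ^ α) / η * t)) * (fadingConst R η α K * t ^ K)
        ≤ μ.real {ω | η * Y ω / (1 + r ω ^ α) ≤ t} ∧
      μ.real {ω | η * Y ω / (1 + r ω ^ α) ≤ t} ≤ fadingConst R η α K * t ^ K := by
  set g : ℝ → ℝ := fun s => (1 + s ^ α) / η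
  have hg0 (s : ℝ) (hs : 0 ≤ s) : 0 ≤ g s := by positivity
  have hlo : ENNReal.ofReal (exp (-(g R * t)) * t ^ K * fadingConst R η α K)
      ≤ μ {ω | η * Y ω / (1 + r ω ^ α) ≤ t} := by
    rw [measure_fadingGain_le_eq hη hr hY hrY hrlaw,
      ← setLIntegral_ofReal_mul_radialDensity hR hη.le hα K (by positivity)]
    refine setLIntegral_mono' measurableSet_Icc fun s ⟨hs0, hsR⟩ => ?_
    have : exp (-(g R * t)) ≤ exp (-(t * g s)) := by
      have := Real.rpow_le_rpow hs0 hsR hα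
      have : g s ≤ g R := by simp only [g]; gcongr
      exact exp_le_exp.2 (by nlinarith)
    calc ENNReal.ofReal (exp (-(g R * t)) * t ^ K * (2 * s / R ^ 2 * (g s ^ K / K !)))
        ≤ ENNReal.ofReal (2 * s / R ^ 2 * (exp (-(t * g s)) * ((t * g s) ^ K / K !))) := by
          refine ENNReal.ofReal_le_ofReal ?_
          have := hg0 s hs0
          rw [mul_pow]
          calc _ ≤ exp (-(t * g s)) * t ^ K * (2 * s / R ^ 2 * (g s ^ K / K !)) := by gcongr
            _ = _ := by ring
      _ ≤ ENNReal.ofReal (2 * s / R ^ 2) * μ {ω | Y ω ≤ t * g s} := by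
          rw [ENNReal.ofReal_mul (by positivity)]
          exact mul_le_mul_right (hYlo _ (mul_nonneg ht (hg0 s hs0))) _
  have hhi : μ {ω | η * Y ω / (1 + r ω ^ α) ≤ t}
      ≤ ENNReal.ofReal (t ^ K * fadingConst R η α K) := by
    rw [measure_fadingGain_le_eq hη hr hY hrY hrlaw,
      ← setLIntegral_ofReal_mul_radialDensity hR hη.le hα K (by positivity)]
    refine setLIntegral_mono' measurableSet_Icc fun s ⟨hs0, _⟩ => ?_
    calc ENNReal.ofReal (2 * s / R ^ 2) * μ {ω | Y ω ≤ t * g s}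
        ≤ ENNReal.ofReal (2 * s / R ^ 2) * ENNReal.ofReal ((t * g s) ^ K / K !) :=
          mul_le_mul_right (hYhi _ (mul_nonneg ht (hg0 s hs0))) _
      _ = _ := by
          rw [← ENNReal.ofReal_mul (by positivity), mul_pow]
          simp only [g]
          ring_nf
  refine ⟨?_, ?_⟩
  · rw [← mul_assoc, mul_right_comm]
    exact (ENNReal.ofReal_le_iff_le_toReal (measure_ne_top _ _)).1 hlo
  · rw [mul_comm]
    exact ENNReal.toReal_le_of_le_ofReal
      (by have := fadingConst_nonneg hR hη.le α K; positivity) hhi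

end Laws

section Asymptotics

variable {Ω : Type*} [MeasurableSpace Ω] {μ : Measure Ω} [IsProbabilityMeasure μ] {M K m : ℕ}
  {Z : Fin M → Ω → ℝ} {c C : ℝ}

lemma measureReal_orderStat_le_bounds (hm1 : 1 ≤ m) (hmM : m ≤ M) (hZ : ∀ j, Measurable (Z j))
    (hind : iIndepFun Z μ) (hc : 0 ≤ c)
    (hcdf : ∀ j t, 0 ≤ t → exp (-(C * t)) * (c * t ^ K) ≤ μ.real (Z j ⁻¹' Set.Iic t) ∧
      μ.real (Z j ⁻¹' Set.Iic t) ≤ c * t ^ K) {t : ℝ} (ht : 0 ≤ t) (hsmall : c * t ^ K ≤ 1) :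
    M.choose m * ((exp (-(C * t)) * (c * t ^ K)) ^ m * (1 - c * t ^ K) ^ (M - m))
        ≤ μ.real {ω | orderStat (fun j => Z j ω) m ≤ t} ∧
      μ.real {ω | orderStat (fun j => Z j ω) m ≤ t} ≤ M.choose m * (c * t ^ K) ^ m := by
  have hevent : {ω | orderStat (fun j => Z j ω) m ≤ t} = {ω | m ≤ #{j | Z j ω ≤ t}} :=
    Set.ext fun ω => orderStat_le_iff _ hm1 hmM t
  have hlo := choose_mul_pow_le_measureReal_card_le hZ hind t (by positivity) hsmall
    (fun j => (hcdf j t ht).1) (fun j => (hcdf j t ht).2) m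
  have hhi := measureReal_card_le_le_choose_mul_pow hind t (fun j => (hcdf j t ht).2) m
  rw [Fintype.card_fin] at hlo hhi
  exact hevent ▸ ⟨hlo, hhi⟩

theorem tendsto_pow_mul_measureReal_orderStat_le (hK : K ≠ 0) (hm1 : 1 ≤ m) (hmM : m ≤ M)
    (hZ : ∀ j, Measurable (Z j)) (hind : iIndepFun Z μ) (hc : 0 ≤ c)
    (hcdf : ∀ j t, 0 ≤ t → exp (-(C * t)) * (c * t ^ K) ≤ μ.real (Z j ⁻¹' Set.Iic t) ∧
      μ.real (Z j ⁻¹' Set.Iic t) ≤ c * t ^ K) {a : ℝ} (ha : 0 ≤ a) :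
    Tendsto (fun ρ => ρ ^ (m * K) * μ.real {ω | orderStat (fun j => Z j ω) m ≤ a / ρ}) atTop
      (𝓝 (M.choose m * (c * a ^ K) ^ m)) := by
  have hscale {ρ : ℝ} (hρ : 0 < ρ) (x : ℝ) :
      ρ ^ (m * K) * (x * (c * (a / ρ) ^ K)) ^ m = (x * (c * a ^ K)) ^ m := by
    rw [pow_mul', ← mul_pow, div_pow]
    field_simp
  -- `ρ^{mK}` times the lower bound, as a continuous function of `t = a/ρ`
  let lower (t : ℝ) : ℝ :=
    M.choose m * (exp (-(C * t)) * (c * a ^ K)) ^ m * (1 - c * t ^ K) ^ (M - m)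
  have ht : Tendsto (fun ρ : ℝ => a / ρ) atTop (𝓝 0) := tendsto_const_nhds.div_atTop tendsto_id
  have hlower : Tendsto (fun ρ => lower (a / ρ)) atTop (𝓝 (M.choose m * (c * a ^ K) ^ m)) := by
    have : Continuous lower := by fun_prop
    simpa [lower, hK, Function.comp_def] using (this.tendsto 0).comp ht
  have hsmall : ∀ᶠ ρ in atTop, c * (a / ρ) ^ K ≤ 1 := by
    have : Tendsto (fun ρ => c * (a / ρ) ^ K) atTop (𝓝 0) := by
      simpa [hK, Function.comp_def] using
        ((continuous_const.mul (continuous_pow K)).tendsto 0).comp ht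
    exact this.eventually_le_const zero_lt_one
  refine tendsto_of_tendsto_of_tendsto_of_le_of_le' hlower tendsto_const_nhds ?_ ?_
  all_goals
    filter_upwards [eventually_gt_atTop 0, hsmall] with ρ hρ hsmall
    have hbounds := measureReal_orderStat_le_bounds hm1 hmM hZ hind hc hcdf
      (by positivity : 0 ≤ a / ρ) hsmall
  · calc lower (a / ρ) = ρ ^ (m * K) * (M.choose m * ((exp (-(C * (a / ρ))) * (c * (a / ρ) ^ K))
          ^ m * (1 - c * (a / ρ) ^ K) ^ (M - m))) := by
          rw [mul_left_comm, ← mul_assoc (ρ ^ (m * K)), hscale hρ]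
          ring
      _ ≤ _ := by gcongr; exact hbounds.1
  · calc ρ ^ (m * K) * μ.real {ω | orderStat (fun j => Z j ω) m ≤ a / ρ}
        ≤ ρ ^ (m * K) * (M.choose m * (c * (a / ρ) ^ K) ^ m) := by gcongr; exact hbounds.2
      _ = M.choose m * (c * a ^ K) ^ m := by
          rw [mul_left_comm, ← one_mul (c * (a / ρ) ^ K), hscale hρ, one_mul]

end Asymptotics

lemma sinr_le_iff {ρ z am an ε : ℝ} (hρ : 0 < ρ) (hz : 0 ≤ z) (han : 0 ≤ an)
    (hcond : ε * an < am) :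
    ρ * z * am / (ρ * z * an + 1) ≤ ε ↔ z ≤ ε / (am - ε * an) / ρ := by
  have hδ : 0 < am - ε * an := sub_pos.2 hcond
  rw [div_le_iff₀ (by positivity), div_div, le_div_iff₀ (by positivity)]
  constructor <;> intro h <;> linarith

lemma measure_sinr_orderStat_le_eq {Ω : Type*} [MeasurableSpace Ω] {μ : Measure Ω} {M m : ℕ}
    (hm1 : 1 ≤ m) (hmM : m ≤ M) {Z : Fin M → Ω → ℝ} (hZ0 : ∀ᵐ ω ∂μ, ∀ j, 0 ≤ Z j ω)
    {ρ am an ε : ℝ} (hρ : 0 < ρ) (han : 0 ≤ an) (hcond : ε * an < am) :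
    μ {ω | ρ * orderStat (fun j => Z j ω) m * am / (ρ * orderStat (fun j => Z j ω) m * an + 1)
        ≤ ε}
      = μ {ω | orderStat (fun j => Z j ω) m ≤ ε / (am - ε * an) / ρ} := by
  refine measure_congr (eventuallyEq_set.2 (hZ0.mono fun ω hω => ?_))
  obtain ⟨j, hj⟩ := orderStat_mem_range (fun j => Z j ω) hm1 hmM
  exact sinr_le_iff hρ (hj ▸ hω j) han hcond

theorem outage_probability_m_user_high_snr_general
    {ΩSp : Type*} [MeasurableSpace ΩSp] (μ : Measure ΩSp) [IsProbabilityMeasure μ]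
    (R η α εm am an : ℝ) (hR : 0 < R) (hη : 0 < η) (hα : 0 < α)
    (hεm : 0 < εm) (han : 0 < an) (hcond : εm * an < am)
    (K M m : ℕ) (hK : 1 ≤ K) (hm1 : 1 ≤ m) (hmM : m ≤ M)
    (r Y : Fin M → ΩSp → ℝ)
    (hrmeas : ∀ j, Measurable (r j)) (hYmeas : ∀ j, Measurable (Y j))
    -- the pairs (r_j, Y_j) are independent across j
    (hpairsindep : iIndepFun (fun j ω => (r j ω, Y j ω)) μ)
    -- each r_j has density 2s/R² on [0,R]
    (hrlaw : ∀ j, Measure.map (r j) μ = volume.withDensity (fun s =>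
        ENNReal.ofReal (if s ∈ Set.Icc (0 : ℝ) R then 2 * s / R ^ 2 else 0)))
    -- each Y_j is Erlang(K): a sum of K independent rate-one exponentials
    (hYerlang : ∀ j, ∃ E : Fin K → ΩSp → ℝ, (∀ i, Measurable (E i)) ∧
        iIndepFun E μ ∧
        (∀ i, Measure.map (E i) μ = expMeasure 1) ∧ Y j = fun ω => ∑ i, E i ω)
    -- r_j and Y_j are independent
    (hrYindep : ∀ j, IndepFun (r j) (Y j) μ)
    (Z : Fin M → ΩSp → ℝ) (hZ : ∀ j ω, Z j ω = η * Y j ω / (1 + r j ω ^ α))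
    (Zord : ΩSp → ℝ) (hZord : ∀ ω, Zord ω = orderStat (fun j => Z j ω) m)
    (P : ℝ → ℝ)
    (hP : ∀ ρ, P ρ = (μ {ω | ρ * Zord ω * am / (ρ * Zord ω * an + 1) ≤ εm}).toReal) :
    Filter.Tendsto (fun ρ => ρ ^ (m * K) * P ρ) Filter.atTop
      (nhds (((Nat.factorial M : ℝ) / ((Nat.factorial (M - m) : ℝ) * (Nat.factorial m : ℝ))) *
        ((2 / R ^ 2) * ∫ s in (0 : ℝ)..R,
          (((1 + s ^ α) * εm / (η * (am - εm * an))) ^ K / (Nat.factorial K : ℝ)) * s) ^ m)) := by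
  have hZfun : Z = fun j ω => η * Y j ω / (1 + r j ω ^ α) := funext fun j => funext (hZ j)
  have hZind : iIndepFun Z μ := by
    rw [hZfun]
    exact hpairsindep.comp (fun _ p => η * p.2 / (1 + p.1 ^ α)) fun _ => by fun_prop
  have hZ0 : ∀ᵐ ω ∂μ, ∀ j, 0 ≤ Z j ω := ae_all_iff.2 fun j => by
    simpa only [hZ] using ae_nonneg_fadingGain (α := α) hη.le (hrmeas j) (hrlaw j) (hYerlang j)
  have hout : ∀ᶠ ρ in atTop,
      μ.real {ω | orderStat (fun j => Z j ω) m ≤ εm / (am - εm * an) / ρ} = P ρ := by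
    filter_upwards [eventually_gt_atTop 0] with ρ hρ
    simp only [hP, hZord, measureReal_def,
      measure_sinr_orderStat_le_eq hm1 hmM hZ0 hρ han.le hcond]
  convert (tendsto_pow_mul_measureReal_orderStat_le (Nat.one_le_iff_ne_zero.1 hK) hm1 hmM
    (fun j => hZfun ▸ by fun_prop) hZind (fadingConst_nonneg hR.le hη.le α K)
    (fun j t ht => by
      rw [hZfun]
      exact fading_cdf_bounds hR.le hη hα.le (hrmeas j) (hYmeas j) (hrYindep j) (hrlaw j)
        (fun _ hy => (IsErlang.cdf_bounds (hYerlang j) hy).1)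
        (fun _ hy => (IsErlang.cdf_bounds (hYerlang j) hy).2) ht)
    (a := εm / (am - εm * an)) (by have := sub_pos.2 hcond; positivity)).congr'
    (hout.mono fun ρ h => by rw [h]) using 2
  rw [Nat.cast_choose ℝ hmM, mul_comm (m ! : ℝ), fadingConst_mul_div_pow]

/-- High-SNR asymptotic of the `m`-th user's outage probability (Corollary 3, integral form):
`ρ^{mK} P(ρ) → (M!/((M-m)! m!)) ((2/R²) ∫_0^R (((1+s^α) ε_m/(η (a_m-ε_m a_n)))^K / K!) s ds)^m`,
so the outage probability decays like `ρ^{-mK}` and the diversity order is `m K`. -/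
theorem outage_probability_m_user_high_snr
    {ΩSp : Type*} [MeasurableSpace ΩSp] (μ : Measure ΩSp) [IsProbabilityMeasure μ]
    (R η α εm am an : ℝ) (hR : 0 < R) (hη : 0 < η) (hα : 0 < α)
    (hεm : 0 < εm) (ham : 0 < am) (han : 0 < an) (hcond : εm * an < am)
    (K M m : ℕ) (hK : 1 ≤ K) (hM : 1 ≤ M) (hm1 : 1 ≤ m) (hmM : m ≤ M)
    (r Y : Fin M → ΩSp → ℝ)
    (hrmeas : ∀ j, Measurable (r j)) (hYmeas : ∀ j, Measurable (Y j))
    -- the pairs (r_j, Y_j) are independent across j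
    (hpairsindep : iIndepFun (fun j ω => (r j ω, Y j ω)) μ)
    -- the pairs (r_j, Y_j) are identically distributed
    (hpairsident : ∀ j k, Measure.map (fun ω => (r j ω, Y j ω)) μ
        = Measure.map (fun ω => (r k ω, Y k ω)) μ)
    -- each r_j has density 2s/R² on [0,R]
    (hrlaw : ∀ j, Measure.map (r j) μ = volume.withDensity (fun s =>
        ENNReal.ofReal (if s ∈ Set.Icc (0 : ℝ) R then 2 * s / R ^ 2 else 0)))
    -- each Y_j is Erlang(K): a sum of K independent rate-one exponentials
    (hYerlang : ∀ j, ∃ E : Fin K → ΩSp → ℝ, (∀ i, Measurable (E i)) ∧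
        iIndepFun E μ ∧
        (∀ i, Measure.map (E i) μ = expMeasure 1) ∧ Y j = fun ω => ∑ i, E i ω)
    -- r_j and Y_j are independent
    (hrYindep : ∀ j, IndepFun (r j) (Y j) μ)
    (Z : Fin M → ΩSp → ℝ) (hZ : ∀ j ω, Z j ω = η * Y j ω / (1 + r j ω ^ α))
    (Zord : ΩSp → ℝ) (hZord : ∀ ω, Zord ω = orderStat (fun j => Z j ω) m)
    (P : ℝ → ℝ)
    (hP : ∀ ρ, P ρ = (μ {ω | ρ * Zord ω * am / (ρ * Zord ω * an + 1) ≤ εm}).toReal) :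
    Filter.Tendsto (fun ρ => ρ ^ (m * K) * P ρ) Filter.atTop
      (nhds (((Nat.factorial M : ℝ) / ((Nat.factorial (M - m) : ℝ) * (Nat.factorial m : ℝ))) *
        ((2 / R ^ 2) * ∫ s in (0 : ℝ)..R,
          (((1 + s ^ α) * εm / (η * (am - εm * an))) ^ K / (Nat.factorial K : ℝ)) * s) ^ m)) :=
  outage_probability_m_user_high_snr_general μ R η α εm am an hR hη hα hεm han hcond K M m hK hm1
    hmM r Y hrmeas hYmeas hpairsindep hrlaw hYerlang hrYindep Z hZ Zord hZord P hP
end
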